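/- There exists a finitely generated group G containing an abelian subgroup of finite index (i.e., G is virtually abelian) such that for every finite symmetric generating set A of G, the geodesic language Geo(G,A) is not piecewise excluding. -/

import Mathlib

/-!
The example is the infinite dihedral group `D∞ = DihedralGroup 0`, acting on `ℝ` by the
isometries `r i : x ↦ x - i` and `sr i : x ↦ i - x` (a reflection with centre `i / 2`).

A piecewise excluding language is closed under taking subwords. Since `a a⁻¹` is never
geodesic, a geodesic language closed under subwords contains no geodesic `a u a⁻¹`, so
conjugation by a generator raises word length by at most one, and `a (b t b⁻¹) a⁻¹` has
length at most `3` for all generators `a, b, t`.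

On the other hand, if every generator moves a base point `p` by at most `B`, an element of
length `≤ 3` moves it by at most `3B`. Take `p` midway between the extreme reflection
centres and `B` the largest displacement of a generator; `B > 0` since `A` cannot fix `p`.
If `B = |c|` is attained by a translation `r c`, conjugating a reflection twice by `r c` or
twice by `r c⁻¹` shifts its centre by `∓2c`, and one of the two results moves `p` by at
least `4|c| > 3B`. If `B` is attained by a reflection, then `B ≤ (m₁ - m₂) / 2` for the
extreme reflections `sr m₁, sr m₂`, while `sr m₁ (sr m₂ sr m₁ sr m₂) sr m₁` moves `p` by
`5 (m₁ - m₂) / 2 > 3B`.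
-/

/-- `w` is a word over the alphabet `A`: every letter of `w` lies in `A`. -/
def IsWordOver {G : Type*} (A : Finset G) (w : List G) : Prop :=
  ∀ x ∈ w, x ∈ A

/-- `A` is a finite symmetric (inverse-closed) generating set of the group `G`. -/
def IsSymmGen {G : Type*} [Group G] (A : Finset G) : Prop :=
  Subgroup.closure (A : Set G) = ⊤ ∧ ∀ a ∈ A, a⁻¹ ∈ A

/-- `w` is a geodesic word over `A`: no word over `A` of strictly smaller length
evaluates to the same element of `G`. -/
def IsGeodesic {G : Type*} [Group G] (A : Finset G) (w : List G) : Prop :=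
  IsWordOver A w ∧
    ∀ v : List G, IsWordOver A v → v.prod = w.prod → w.length ≤ v.length

/-- The geodesic language of `G` over `A`. -/
def Geo {G : Type*} [Group G] (A : Finset G) : Set (List G) :=
  {w | IsGeodesic A w}

/-- A language `L` of words over `A` is piecewise excluding if there is a finite set `F`
of words over `A` such that a word `w` over `A` lies in `L` iff no element of `F` is a
piecewise subword (i.e. a not-necessarily-contiguous subsequence) of `w`. -/
def PiecewiseExcluding {G : Type*} (A : Finset G) (L : Set (List G)) : Prop :=
  ∃ F : Finset (List G), (∀ u ∈ F, IsWordOver A u) ∧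
    ∀ w : List G, IsWordOver A w → (w ∈ L ↔ ∀ u ∈ F, ¬ List.Sublist u w)

/-- `G` is finitely generated, virtually abelian, and its geodesic language is not
piecewise excluding for any finite symmetric generating set. -/
def IsVirtuallyAbelianWithNoPEGeodesicLanguage (G : Type) [Group G] : Prop :=
  Group.FG G ∧
  (∃ H : Subgroup G, (∀ x y : H, x * y = y * x) ∧ H.FiniteIndex) ∧
  ∀ A : Finset G, IsSymmGen A → ¬ PiecewiseExcluding A (Geo A)

section WordLength

variable {G : Type*} [Group G] {A : Finset G}

/-- Junk value `0` when `g` is not a product of letters of `A`. -/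
noncomputable def wordLength (A : Finset G) (g : G) : ℕ :=
  sInf {n | ∃ w : List G, IsWordOver A w ∧ w.prod = g ∧ w.length = n}

theorem wordLength_prod_le {w : List G} (hw : IsWordOver A w) :
    wordLength A w.prod ≤ w.length :=
  Nat.sInf_le ⟨w, hw, rfl, rfl⟩

theorem wordLength_le_one {a : G} (ha : a ∈ A) : wordLength A a ≤ 1 := by
  simpa using wordLength_prod_le (A := A) (w := [a]) (by simpa [IsWordOver])

theorem IsSymmGen.exists_word (hA : IsSymmGen A) (g : G) :
    ∃ w : List G, IsWordOver A w ∧ w.prod = g := by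
  have hg : g ∈ (Subgroup.closure (A : Set G)).toSubmonoid := by simp [hA.1]
  have hinv : (A : Set G)⁻¹ ⊆ A := fun a ha => inv_inv a ▸ hA.2 _ ha
  rw [Subgroup.closure_toSubmonoid, Set.union_eq_left.mpr hinv] at hg
  exact Submonoid.exists_list_of_mem_closure hg

theorem IsSymmGen.exists_word_length_eq (hA : IsSymmGen A) (g : G) :
    ∃ w : List G, IsWordOver A w ∧ w.prod = g ∧ w.length = wordLength A g :=
  Nat.sInf_mem (s := {n | ∃ w : List G, IsWordOver A w ∧ w.prod = g ∧ w.length = n})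
    (let ⟨w, hw, hwg⟩ := IsSymmGen.exists_word hA g; ⟨w.length, w, hw, hwg, rfl⟩)

theorem isGeodesic_of_length_le {w : List G} (hw : IsWordOver A w)
    (hlen : w.length ≤ wordLength A w.prod) : IsGeodesic A w :=
  ⟨hw, fun v hv hvw => hlen.trans (hvw ▸ wordLength_prod_le hv)⟩

end WordLength

theorem PiecewiseExcluding.mem_of_sublist {G : Type*} {A : Finset G} {L : Set (List G)}
    (hL : PiecewiseExcluding A L) {w u : List G} (hwA : IsWordOver A w) (hw : w ∈ L)
    (huw : u.Sublist w) : u ∈ L := by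
  obtain ⟨F, -, hF⟩ := hL
  rw [hF w hwA] at hw
  exact (hF u fun x hx => hwA x (huw.subset hx)).mpr fun f hf hfu => hw f hf (hfu.trans huw)

theorem wordLength_conj_le {G : Type*} [Group G] {A : Finset G} (hA : IsSymmGen A)
    (hGeo : ∀ w ∈ Geo A, ∀ u : List G, u.Sublist w → u ∈ Geo A) {a : G} (ha : a ∈ A) (g : G) :
    wordLength A (a * g * a⁻¹) ≤ wordLength A g + 1 := by
  by_contra! hlt
  obtain ⟨u, hu, rfl, hlen⟩ := IsSymmGen.exists_word_length_eq hA g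
  have hw : IsWordOver A (a :: (u ++ [a⁻¹])) := by
    simp only [IsWordOver, List.mem_cons, List.mem_append, List.not_mem_nil, or_false]
    rintro x (hx | hx | hx)
    exacts [hx ▸ ha, hu x hx, hx ▸ hA.2 a ha]
  have hprod : (a :: (u ++ [a⁻¹])).prod = a * u.prod * a⁻¹ := by simp [mul_assoc]
  have hgeo : a :: (u ++ [a⁻¹]) ∈ Geo A :=
    isGeodesic_of_length_le hw <| by
      rw [hprod]; simp only [List.length_cons, List.length_append, List.length_nil]; omega
  have hsub : [a, a⁻¹].Sublist (a :: (u ++ [a⁻¹])) :=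
    (List.nil_sublist u).append (List.Sublist.refl [a⁻¹]) |>.cons_cons a
  have hshort := (hGeo _ hgeo _ hsub).2 [] (fun _ h => absurd h List.not_mem_nil) (by simp)
  simp at hshort

section IsometricAction

variable {G X : Type*} [Group G] [PseudoMetricSpace X] [MulAction G X] [IsIsometricSMul G X]
  {A : Finset G}

theorem dist_prod_smul_le {x : X} {B : ℝ} (hB : ∀ a ∈ A, dist (a • x) x ≤ B) {w : List G}
    (hw : IsWordOver A w) : dist (w.prod • x) x ≤ B * w.length := by
  induction w with
  | nil => simp
  | cons a w ih =>
    have ha : a ∈ A := hw a List.mem_cons_self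
    calc dist ((a :: w).prod • x) x ≤ dist (a • w.prod • x) (a • x) + dist (a • x) x := by
          rw [List.prod_cons, mul_smul]; exact dist_triangle _ _ _
      _ ≤ B * w.length + B := by
          rw [dist_smul]
          exact add_le_add (ih fun y hy => hw y (List.mem_cons_of_mem a hy)) (hB a ha)
      _ = B * (a :: w).length := by rw [List.length_cons]; push_cast; ring

theorem dist_smul_le_mul_wordLength (hA : IsSymmGen A) {x : X} {B : ℝ}
    (hB : ∀ a ∈ A, dist (a • x) x ≤ B) (g : G) : dist (g • x) x ≤ B * wordLength A g := by
  obtain ⟨w, hw, rfl, hlen⟩ := IsSymmGen.exists_word_length_eq hA g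
  simpa [hlen] using dist_prod_smul_le hB hw

end IsometricAction

theorem exists_mem_notMem_of_closure_eq_top {G : Type*} [Group G] {A : Set G}
    (hA : Subgroup.closure A = ⊤) {H : Subgroup G} {g : G} (hg : g ∉ H) : ∃ a ∈ A, a ∉ H := by
  by_contra! hAH
  exact hg ((Subgroup.closure_le H).mpr hAH (hA ▸ Subgroup.mem_top g))

namespace DihedralGroup

def sign {n : ℕ} : DihedralGroup n →* ℤˣ where
  toFun
    | r _ => 1
    | sr _ => -1
  map_one' := rfl
  map_mul' := by rintro (i | i) (j | j) <;> rfl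

@[simp] theorem sign_r {n : ℕ} (i : ZMod n) : sign (r i) = 1 := rfl

@[simp] theorem sign_sr {n : ℕ} (i : ZMod n) : sign (sr i) = -1 := rfl

theorem mem_ker_sign {n : ℕ} {g : DihedralGroup n} : g ∈ sign.ker ↔ ∃ i, g = r i := by
  rcases g with i | i <;> simp

theorem ker_sign_mul_comm {n : ℕ} (x y : (sign : DihedralGroup n →* ℤˣ).ker) :
    x * y = y * x := by
  obtain ⟨i, hi⟩ := mem_ker_sign.mp x.2
  obtain ⟨j, hj⟩ := mem_ker_sign.mp y.2
  ext
  simp only [Subgroup.coe_mul, hi, hj, r_mul_r, add_comm]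

theorem closure_r_one_sr_zero {n : ℕ} :
    Subgroup.closure ({r 1, sr 0} : Set (DihedralGroup n)) = ⊤ := by
  have hr : (r 1 : DihedralGroup n) ∈ Subgroup.closure {r 1, sr 0} :=
    Subgroup.subset_closure (by simp)
  have hsr : (sr 0 : DihedralGroup n) ∈ Subgroup.closure {r 1, sr 0} :=
    Subgroup.subset_closure (by simp)
  have hri (i : ZMod n) : r i ∈ Subgroup.closure {r 1, sr 0} := by
    simpa [r_one_zpow, ZMod.intCast_zmod_cast] using zpow_mem hr (i.cast : ℤ)
  rw [eq_top_iff]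
  rintro (i | i) -
  · exact hri i
  · simpa [sr_mul_r] using mul_mem hsr (hri i)

instance {n : ℕ} : Group.FG (DihedralGroup n) :=
  Group.fg_iff.mpr ⟨_, closure_r_one_sr_zero, Set.toFinite _⟩

instance : SMul (DihedralGroup 0) ℝ where
  smul
    | r i, x => x - i.cast
    | sr i, x => i.cast - x

@[simp] theorem r_smul (i : ZMod 0) (x : ℝ) : r i • x = x - i.cast := rfl

@[simp] theorem sr_smul (i : ZMod 0) (x : ℝ) : sr i • x = i.cast - x := rfl

instance : MulAction (DihedralGroup 0) ℝ where
  one_smul x := by rw [one_def, r_smul, ZMod.cast_zero, sub_zero]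
  mul_smul := by rintro (i | i) (j | j) x <;> simp <;> ring

instance : IsIsometricSMul (DihedralGroup 0) ℝ :=
  ⟨by
    rintro (i | i) <;> refine Isometry.of_dist_eq fun x y => ?_ <;>
      simp only [r_smul, sr_smul, Real.dist_eq]
    · rw [sub_sub_sub_cancel_right]
    · rw [sub_sub_sub_cancel_left, abs_sub_comm]⟩

@[simp] theorem dist_r_smul (i : ZMod 0) (x : ℝ) : dist (r i • x) x = |i.cast| := by
  rw [r_smul, Real.dist_eq, sub_sub_cancel_left, abs_neg]

@[simp] theorem dist_sr_smul (i : ZMod 0) (x : ℝ) : dist (sr i • x) x = |i.cast - 2 * x| := by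
  rw [sr_smul, Real.dist_eq, two_mul, sub_sub]

theorem r_mul_sr_mul_inv {n : ℕ} (i j : ZMod n) : r i * sr j * (r i)⁻¹ = sr (j - i - i) := by
  rw [inv_r, r_mul_sr, sr_mul_r, ← sub_eq_add_neg]

theorem sr_mul_sr_mul_inv {n : ℕ} (i j : ZMod n) : sr i * sr j * (sr i)⁻¹ = sr (i + i - j) := by
  rw [inv_sr, sr_mul_sr, r_mul_sr, sub_sub_eq_add_sub]

theorem exists_sr_mem {n : ℕ} {A : Finset (DihedralGroup n)} (hA : IsSymmGen A) :
    ∃ m, sr m ∈ A := by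
  obtain ⟨a, ha, hker⟩ := exists_mem_notMem_of_closure_eq_top hA.1 (H := sign.ker) (g := sr 0)
    (by simp)
  rcases a with i | i
  · exact absurd (mem_ker_sign.mpr ⟨i, rfl⟩) hker
  · exact ⟨i, ha⟩

theorem exists_wordLength_conj_conj_gt {A : Finset (DihedralGroup 0)} (hA : IsSymmGen A) :
    ∃ a ∈ A, ∃ b ∈ A, ∃ t ∈ A, 3 < wordLength A (a * (b * t * b⁻¹) * a⁻¹) := by
  by_contra! hle
  have hinj : Set.InjOn (sr : ZMod 0 → DihedralGroup 0) (sr ⁻¹' A) := fun _ _ _ _ => sr.inj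
  obtain ⟨m, hm⟩ := exists_sr_mem hA
  obtain ⟨m₁, hm₁, hmax⟩ :=
    (A.preimage sr hinj).exists_max_image (fun i => (i.cast : ℝ)) ⟨m, by simpa⟩
  obtain ⟨m₂, hm₂, hmin⟩ :=
    (A.preimage sr hinj).exists_min_image (fun i => (i.cast : ℝ)) ⟨m, by simpa⟩
  rw [Finset.mem_preimage] at hm₁ hm₂
  -- `p` is the midpoint of the extreme reflection centres `m₁ / 2` and `m₂ / 2`.
  set p : ℝ := (m₁.cast + m₂.cast) / 4
  obtain ⟨a₀, ha₀, hB⟩ := A.exists_max_image (fun a => dist (a • p) p) ⟨_, hm⟩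
  have hBpos : 0 < dist (a₀ • p) p := by
    obtain ⟨a, ha, hap⟩ := exists_mem_notMem_of_closure_eq_top hA.1
      (H := MulAction.stabilizer _ p) (g := r 1) (by simp)
    exact (dist_pos.mpr hap).trans_le (hB a ha)
  have hlen : ∀ g, wordLength A g ≤ 3 → dist (g • p) p ≤ 3 * dist (a₀ • p) p := fun g hg =>
    (dist_smul_le_mul_wordLength hA hB g).trans (by rw [mul_comm]; gcongr; exact_mod_cast hg)
  rcases a₀ with c | i
  · have h₁ : |m₁.cast - 4 * c.cast - 2 * p| ≤ 3 * |c.cast| := by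
      have := hlen _ (hle _ ha₀ _ ha₀ _ hm₁)
      simp only [r_mul_sr_mul_inv, dist_sr_smul, dist_r_smul, ZMod.cast_sub'] at this
      convert this using 2; ring
    have h₂ : |m₁.cast + 4 * c.cast - 2 * p| ≤ 3 * |c.cast| := by
      have ha₀' : r (-c) ∈ A := inv_r c ▸ hA.2 _ ha₀
      have := hlen _ (hle _ ha₀' _ ha₀' _ hm₁)
      simp only [r_mul_sr_mul_inv, dist_sr_smul, dist_r_smul, ZMod.cast_sub',
        ZMod.cast_neg dvd_rfl] at this
      convert this using 2; ring
    rw [dist_r_smul] at hBpos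
    obtain ⟨h₁lo, h₁hi⟩ := abs_le.mp h₁
    obtain ⟨h₂lo, h₂hi⟩ := abs_le.mp h₂
    cases abs_cases (c.cast : ℝ) <;> linarith
  · have h : |(3 * m₁.cast - 2 * m₂.cast) - 2 * p| ≤ 3 * |i.cast - 2 * p| := by
      have := hlen _ (hle _ hm₁ _ hm₂ _ hm₁)
      simp only [sr_mul_sr_mul_inv, dist_sr_smul, ZMod.cast_sub', ZMod.cast_add'] at this
      convert this using 2; ring
    have hi₁ := hmax i (by simpa using ha₀)
    have hi₂ := hmin i (by simpa using ha₀)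
    rw [dist_sr_smul] at hBpos
    have hp : 2 * p = (m₁.cast + m₂.cast) / 2 := by ring
    have hi : |i.cast - 2 * p| ≤ (m₁.cast - m₂.cast) / 2 := abs_le.mpr ⟨by linarith, by linarith⟩
    have h₅ : 5 / 2 * (m₁.cast - m₂.cast) ≤ |(3 * m₁.cast - 2 * m₂.cast) - 2 * p| :=
      (le_of_eq (by rw [hp]; ring)).trans (le_abs_self _)
    linarith

theorem not_piecewiseExcluding_geo {A : Finset (DihedralGroup 0)} (hA : IsSymmGen A) :
    ¬ PiecewiseExcluding A (Geo A) := by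
  intro hPE
  have hGeo : ∀ w ∈ Geo A, ∀ u : List (DihedralGroup 0), u.Sublist w → u ∈ Geo A :=
    fun w hw u huw => PiecewiseExcluding.mem_of_sublist hPE hw.1 hw huw
  obtain ⟨a, ha, b, hb, t, ht, hlt⟩ := exists_wordLength_conj_conj_gt hA
  have h₁ := wordLength_conj_le hA hGeo ha (b * t * b⁻¹)
  have h₂ := wordLength_conj_le hA hGeo hb t
  have h₃ := wordLength_le_one (A := A) ht
  omega

end DihedralGroup

/-- There is a finitely generated virtually abelian group whose geodesic language is not
piecewise excluding for any finite symmetric generating set. -/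
theorem exists_virtually_abelian_not_piecewise_excluding :
    ∃ (G : Type) (instG : Group G),
      @IsVirtuallyAbelianWithNoPEGeodesicLanguage G instG :=
  ⟨DihedralGroup 0, inferInstance, inferInstance,
    ⟨DihedralGroup.sign.ker, DihedralGroup.ker_sign_mul_comm, inferInstance⟩,
    fun _ hA => DihedralGroup.not_piecewiseExcluding_geo hA⟩
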